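/- arXiv:0809.1164 — 3 statements merged into one kernel-verified Lean document; each statement's English description precedes it below -/
import Mathlib

section
/- Let τ, ξ, λ, η be real numbers and set Γ = |τ| − |ξ|, Θ₊ = λ + η, Σ₋ = τ − λ − (ξ − η). Then min(|η|, |ξ − η|) ≤ C·max(|Γ|, |Θ₊|, |Σ₋|) for some absolute constant C. -/
/-- Comparison estimate between elliptic and hyperbolic weights:
min(|η|, |ξ−η|) ≲ max(|Γ|, |Θ₊|, |Σ₋|) where Γ = |τ|−|ξ|, Θ₊ = λ+η,
Σ₋ = τ−λ−(ξ−η). -/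
theorem elliptic_hyperbolic_comparison :
    ∃ C : ℝ, 0 < C ∧ ∀ τ ξ lam η : ℝ,
      min |η| |ξ - η| ≤
        C * max |(|τ| - |ξ|)| (max |lam + η| |τ - lam - (ξ - η)|) := by
  refine ⟨2, by norm_num, fun τ ξ lam η => ?_⟩
  set M := max |(|τ| - |ξ|)| (max |lam + η| |τ - lam - (ξ - η)|) with hM
  have hΓ : |(|τ| - |ξ|)| ≤ M := le_max_left _ _
  have hΘ : |lam + η| ≤ M := le_trans (le_max_left _ _) (le_max_right _ _)
  have hSig : |τ - lam - (ξ - η)| ≤ M := le_trans (le_max_right _ _) (le_max_right _ _)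
  -- min(|τ-ξ|, |τ+ξ|) ≤ ||τ|-|ξ||
  have hkey : min |τ - ξ| |τ + ξ| ≤ |(|τ| - |ξ|)| := by
    rcases abs_cases τ with ⟨ha, _⟩ | ⟨ha, _⟩ <;>
      rcases abs_cases ξ with ⟨hb, _⟩ | ⟨hb, _⟩ <;> rw [ha, hb]
    · exact min_le_left _ _
    · rw [sub_neg_eq_add]; exact min_le_right _ _
    · rw [show -τ - ξ = -(τ + ξ) by ring, abs_neg]; exact min_le_right _ _
    · rw [show -τ - -ξ = -(τ - ξ) by ring, abs_neg]; exact min_le_left _ _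
  rcases min_cases |τ - ξ| |τ + ξ| with ⟨hmin, _⟩ | ⟨hmin, _⟩
  · -- |τ-ξ| ≤ M, bound |η|
    have h1 : |τ - ξ| ≤ M := le_trans (hmin ▸ hkey) hΓ
    have h2 : 2 * η = (lam + η) + (τ - lam - (ξ - η)) - (τ - ξ) := by ring
    have h3 : |η| ≤ M + M := by
      have a1 := le_abs_self (lam + η)
      have a2 := neg_abs_le (lam + η)
      have b1 := le_abs_self (τ - lam - (ξ - η))
      have b2 := neg_abs_le (τ - lam - (ξ - η))
      have c1 := le_abs_self (τ - ξ)
      have c2 := neg_abs_le (τ - ξ)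
      rcases abs_cases η with ⟨he, _⟩ | ⟨he, _⟩ <;> rw [he] <;> linarith
    calc min |η| |ξ - η| ≤ |η| := min_le_left _ _
      _ ≤ 2 * M := by linarith
  · -- |τ+ξ| ≤ M, bound |ξ-η|
    have h1 : |τ + ξ| ≤ M := le_trans (hmin ▸ hkey) hΓ
    have h2 : 2 * (ξ - η) = (τ + ξ) - (lam + η) - (τ - lam - (ξ - η)) := by ring
    have h3 : |ξ - η| ≤ M + M := by
      have a1 := le_abs_self (lam + η)
      have a2 := neg_abs_le (lam + η)
      have b1 := le_abs_self (τ - lam - (ξ - η))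
      have b2 := neg_abs_le (τ - lam - (ξ - η))
      have c1 := le_abs_self (τ + ξ)
      have c2 := neg_abs_le (τ + ξ)
      rcases abs_cases (ξ - η) with ⟨he, _⟩ | ⟨he, _⟩ <;> rw [he] <;> linarith
    calc min |η| |ξ - η| ≤ |ξ - η| := min_le_right _ _
      _ ≤ 2 * M := by linarith
end

section
/- Let s < 0, N ≥ 1, and q be the I-method multiplier symbol. If ξ, η ∈ ℝ satisfy |ξ − η| ≥ 2N (high frequency) and |η| < N (low frequency, so q(η) = 1), then |q(ξ) − q(ξ−η)| ≤ C N^{−s} |ξ−η|^{s−1} |η| for a constant C depending only on s and the symbol χ, where q(ξ) = χ(ξ/N) with χ smooth, even, monotone, χ(σ)=1 for 0 ≤ σ < 1 and χ(σ) = σ^s for σ > 2. -/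
/-- Mean-value-theorem commutator bound for the I-method symbol
q(ξ) = χ(ξ/N) in the low/high frequency interaction:
|q(ξ) − q(ξ−η)| ≤ C N^{−s} |ξ−η|^{s−1} |η| when |ξ−η| ≥ 2N and |η| < N. -/
theorem I_symbol_mvt_bound (s : ℝ) (hs : s < 0) (χ : ℝ → ℝ)
    (hχeven : ∀ σ, χ (-σ) = χ σ) (hχsmooth : ContDiff ℝ (⊤ : ℕ∞) χ)
    (hχmono : AntitoneOn χ (Set.Ici 0))
    (hχ1 : ∀ σ : ℝ, 0 ≤ σ → σ < 1 → χ σ = 1)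
    (hχ2 : ∀ σ : ℝ, 2 < σ → χ σ = σ ^ s) :
    ∃ C : ℝ, 0 < C ∧ ∀ N : ℝ, 1 ≤ N → ∀ ξ η : ℝ, 2 * N ≤ |ξ - η| → |η| < N →
      |χ (ξ / N) - χ ((ξ - η) / N)| ≤ C * N ^ (-s) * |ξ - η| ^ (s - 1) * |η| := by
  -- Bound the derivative of χ on the compact set [1,2]
  obtain ⟨K, hK⟩ := (isCompact_Icc (a := (1:ℝ)) (b := 2)).exists_bound_of_continuousOn
    ((hχsmooth.continuous_deriv (by simp)).continuousOn)
  have hK0 : 0 ≤ K := le_trans (norm_nonneg _) (hK 1 (by norm_num))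
  set A : ℝ := max (K * 2 ^ (1 - s)) |s| with hA_def
  have hApos : 0 < A := lt_of_lt_of_le (abs_pos.mpr (ne_of_lt hs)) (le_max_right _ _)
  -- derivative of χ is odd (since χ is even)
  have hodd : ∀ σ : ℝ, deriv χ σ = - deriv χ (-σ) := by
    intro σ
    have h1 : χ = fun x => χ (-x) := funext fun x => (hχeven x).symm
    conv_lhs => rw [h1]
    exact deriv_comp_neg χ σ
  -- key derivative bound for |σ| ≥ 1
  have hAbound : ∀ σ : ℝ, 1 ≤ |σ| → |deriv χ σ| ≤ A * |σ| ^ (s - 1) := by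
    have hpos : ∀ σ : ℝ, 1 ≤ σ → |deriv χ σ| ≤ A * σ ^ (s - 1) := by
      intro σ hσ
      have hσ0 : (0:ℝ) < σ := lt_of_lt_of_le one_pos hσ
      rcases le_or_gt σ 2 with h2 | h2
      · -- σ ∈ [1,2]
        have hKb : |deriv χ σ| ≤ K := hK σ ⟨hσ, h2⟩
        have hx : (2:ℝ) ^ (s - 1) ≤ σ ^ (s - 1) :=
          Real.rpow_le_rpow_of_nonpos hσ0 h2 (by linarith)
        have h21 : (2:ℝ) ^ (1 - s) * (2:ℝ) ^ (s - 1) = 1 := by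
          rw [← Real.rpow_add (by norm_num)]; norm_num
        calc |deriv χ σ| ≤ K := hKb
          _ = K * ((2:ℝ) ^ (1 - s) * (2:ℝ) ^ (s - 1)) := by rw [h21, mul_one]
          _ = K * 2 ^ (1 - s) * (2:ℝ) ^ (s - 1) := by ring
          _ ≤ A * σ ^ (s - 1) := by
              apply mul_le_mul (le_max_left _ _) hx
              · positivity
              · exact le_of_lt hApos
      · -- σ > 2 : χ = x ^ s near σ
        have hev : χ =ᶠ[nhds σ] fun x => x ^ s := by
          filter_upwards [isOpen_Ioi.mem_nhds (show σ ∈ Set.Ioi (2:ℝ) from h2)] with x hx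
          exact hχ2 x hx
        have hd : HasDerivAt χ (s * σ ^ (s - 1)) σ :=
          (Real.hasDerivAt_rpow_const (Or.inl (ne_of_gt hσ0))).congr_of_eventuallyEq hev
        rw [hd.deriv, abs_mul, abs_of_nonneg (Real.rpow_nonneg (le_of_lt hσ0) _)]
        exact mul_le_mul_of_nonneg_right (le_max_right _ _) (Real.rpow_nonneg (le_of_lt hσ0) _)
    intro σ hσ
    rcases le_or_gt 0 σ with h0 | h0
    · rw [abs_of_nonneg h0] at hσ ⊢; exact hpos σ hσ
    · rw [abs_of_neg h0] at hσ ⊢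
      rw [hodd σ, abs_neg]
      exact hpos (-σ) hσ
  -- the final constant
  refine ⟨A * 2 ^ (1 - s), by positivity, ?_⟩
  intro N hN ξ η hhi hlo
  have hN0 : (0:ℝ) < N := lt_of_lt_of_le one_pos hN
  have hd0 : (0:ℝ) < |ξ - η| := lt_of_lt_of_le (by linarith) hhi
  -- MVT on the segment from ξ - η to ξ
  set f : ℝ → ℝ := fun t => χ (t / N) with hf_def
  set f' : ℝ → ℝ := fun t => deriv χ (t / N) * (1 / N) with hf'_def
  have hder : ∀ x ∈ segment ℝ (ξ - η) ξ, HasDerivWithinAt f (f' x) (segment ℝ (ξ - η) ξ) x := by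
    intro x _
    have h1 : HasDerivAt (fun t : ℝ => t / N) (1 / N) x := by
      simpa using (hasDerivAt_id x).div_const N
    exact (((hχsmooth.differentiable (by simp)).differentiableAt.hasDerivAt).comp x h1).hasDerivWithinAt
  have hbound : ∀ x ∈ segment ℝ (ξ - η) ξ,
      ‖f' x‖ ≤ A * 2 ^ (1 - s) * N ^ (-s) * |ξ - η| ^ (s - 1) := by
    intro x hx
    obtain ⟨u, v, hu, hv, huv, hx⟩ := hx
    simp only [smul_eq_mul] at hx
    have hx' : x = (ξ - η) + v * η := by linear_combination -hx + (ξ - η) * huv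
    have hxlb : |ξ - η| - |η| ≤ |x| := by
      have h1 : |ξ - η - x| = v * |η| := by
        rw [hx', show ξ - η - (ξ - η + v * η) = -(v * η) by ring, abs_neg, abs_mul,
          abs_of_nonneg hv]
      have h2 : |ξ - η| - |x| ≤ |ξ - η - x| := abs_sub_abs_le_abs_sub (ξ - η) x
      have hv1 : v ≤ 1 := by linarith
      nlinarith [abs_nonneg η]
    have hhalf : |ξ - η| / 2 ≤ |x| := by linarith
    have hx1 : 1 ≤ |x / N| := by
      rw [abs_div, abs_of_pos hN0, le_div_iff₀ hN0, one_mul]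
      linarith
    have hxratio : |ξ - η| / (2 * N) ≤ |x / N| := by
      rw [abs_div, abs_of_pos hN0, div_le_div_iff₀ (by positivity) hN0]
      nlinarith
    have hrx : |x / N| ^ (s - 1) ≤ (|ξ - η| / (2 * N)) ^ (s - 1) :=
      Real.rpow_le_rpow_of_nonpos (by positivity) hxratio (by linarith)
    have hsplit : (|ξ - η| / (2 * N)) ^ (s - 1) * (1 / N)
        = 2 ^ (1 - s) * N ^ (-s) * |ξ - η| ^ (s - 1) := by
      have e1 : (2:ℝ) ^ (1 - s) = ((2:ℝ) ^ (s - 1))⁻¹ := by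
        rw [show (1 - s) = -(s - 1) by ring, Real.rpow_neg (by norm_num)]
      have e2 : N ^ (-s) = (N ^ (s - 1))⁻¹ * N⁻¹ := by
        rw [show (-s) = -(s - 1) + (-1) by ring, Real.rpow_add hN0,
          Real.rpow_neg hN0.le, Real.rpow_neg hN0.le, Real.rpow_one]
      rw [Real.div_rpow hd0.le (by positivity),
        Real.mul_rpow (by norm_num) hN0.le, e1, e2]
      have p1 : (0:ℝ) < (2:ℝ) ^ (s - 1) := Real.rpow_pos_of_pos (by norm_num) _
      have p2 : (0:ℝ) < N ^ (s - 1) := Real.rpow_pos_of_pos hN0 _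
      ring
    have hnn : (0:ℝ) ≤ 1 / N := by positivity
    calc ‖f' x‖ = |deriv χ (x / N)| * (1 / N) := by
          simp only [hf'_def, Real.norm_eq_abs, abs_mul]
          rw [abs_of_nonneg hnn]
      _ ≤ (A * |x / N| ^ (s - 1)) * (1 / N) :=
          mul_le_mul_of_nonneg_right (hAbound _ hx1) hnn
      _ ≤ (A * (|ξ - η| / (2 * N)) ^ (s - 1)) * (1 / N) := by
          apply mul_le_mul_of_nonneg_right _ hnn
          exact mul_le_mul_of_nonneg_left hrx hApos.le
      _ = A * ((|ξ - η| / (2 * N)) ^ (s - 1) * (1 / N)) := by ring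
      _ = A * (2 ^ (1 - s) * N ^ (-s) * |ξ - η| ^ (s - 1)) := by rw [hsplit]
      _ = A * 2 ^ (1 - s) * N ^ (-s) * |ξ - η| ^ (s - 1) := by ring
  have hmvt := Convex.norm_image_sub_le_of_norm_hasDerivWithin_le hder hbound
    (convex_segment _ _) (left_mem_segment ℝ (ξ - η) ξ) (right_mem_segment ℝ (ξ - η) ξ)
  have heq : ξ - (ξ - η) = η := by ring
  rw [heq, Real.norm_eq_abs, Real.norm_eq_abs] at hmvt
  calc |χ (ξ / N) - χ ((ξ - η) / N)| = |f ξ - f (ξ - η)| := rfl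
    _ ≤ A * 2 ^ (1 - s) * N ^ (-s) * |ξ - η| ^ (s - 1) * |η| := hmvt
end

section
/- Let s < 0 and let q be the I-method symbol with parameter N ≥ 1. For any θ ∈ [0,1], and any ξ, η ∈ ℝ with |η| < N and |ξ−η| ≥ 2N, |q(ξ) − q(ξ−η)| ≤ C N^{−s} |ξ−η|^{s−θ} |η|^{θ}. -/
/-- Interpolated commutator bound for the I-method symbol q(ξ) = χ(ξ/N):
for θ ∈ [0,1], |q(ξ) − q(ξ−η)| ≤ C N^{−s} |ξ−η|^{s−θ} |η|^{θ}
when |η| < N and |ξ−η| ≥ 2N. -/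
theorem I_symbol_interpolated_bound (s : ℝ) (hs : s < 0) (χ : ℝ → ℝ)
    (hχeven : ∀ σ, χ (-σ) = χ σ) (hχsmooth : ContDiff ℝ (⊤ : ℕ∞) χ)
    (hχmono : AntitoneOn χ (Set.Ici 0))
    (hχ1 : ∀ σ : ℝ, 0 ≤ σ → σ < 1 → χ σ = 1)
    (hχ2 : ∀ σ : ℝ, 2 < σ → χ σ = σ ^ s) :
    ∃ C : ℝ, 0 < C ∧ ∀ θ : ℝ, 0 ≤ θ → θ ≤ 1 →
      ∀ N : ℝ, 1 ≤ N → ∀ ξ η : ℝ, |η| < N → 2 * N ≤ |ξ - η| →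
      |χ (ξ / N) - χ ((ξ - η) / N)| ≤ C * N ^ (-s) * |ξ - η| ^ (s - θ) * |η| ^ θ := by
  have hd : Differentiable ℝ χ := hχsmooth.differentiable (by simp)
  have hdc : Continuous (deriv χ) := hχsmooth.continuous_deriv (by simp)
  -- bound on compact set
  obtain ⟨M, hM⟩ := (isCompact_Icc (a := (-3:ℝ)) (b := 3)).exists_bound_of_continuousOn
    hdc.continuousOn
  -- deriv formula for σ > 2
  have hderiv_gt : ∀ σ : ℝ, 2 < σ → deriv χ σ = s * σ ^ (s - 1) := by
    intro σ hσ
    have hev : χ =ᶠ[nhds σ] fun x => x ^ s := by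
      filter_upwards [Ioi_mem_nhds hσ] with x hx
      exact hχ2 x hx
    rw [hev.deriv_eq]
    exact Real.deriv_rpow_const σ s
  -- deriv is odd
  have hderiv_neg : ∀ σ : ℝ, deriv χ (-σ) = - deriv χ σ := by
    intro σ
    have hfun : (fun x => χ (-x)) = χ := funext hχeven
    have h1 : deriv (fun x => χ (-x)) σ = - deriv χ (-σ) := deriv_comp_neg χ σ
    rw [hfun] at h1
    linarith
  -- key pointwise bound
  set K : ℝ := max |s| (max M 0 * 3 ^ (1 - s)) + 1 with hK
  have hKpos : 0 < K := by
    have : (0:ℝ) ≤ max |s| (max M 0 * 3 ^ (1 - s)) :=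
      le_max_of_le_left (abs_nonneg s)
    linarith
  have key : ∀ σ : ℝ, 1 ≤ |σ| → |deriv χ σ| ≤ K * |σ| ^ (s - 1) := by
    have keyPos : ∀ τ : ℝ, 1 ≤ τ → |deriv χ τ| ≤ K * τ ^ (s - 1) := by
      intro τ hτ
      have hτ0 : (0:ℝ) < τ := by linarith
      have hτs : (0:ℝ) < τ ^ (s - 1) := Real.rpow_pos_of_pos hτ0 _
      rcases le_or_gt τ 3 with h3 | h3
      · have hMτ : |deriv χ τ| ≤ M := by
          have := hM τ ⟨by linarith, h3⟩
          simpa using this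
        have h31 : (3:ℝ) ^ (s - 1) ≤ τ ^ (s - 1) :=
          Real.rpow_le_rpow_of_nonpos hτ0 h3 (by linarith)
        have h3pos : (0:ℝ) < (3:ℝ) ^ (1 - s) := Real.rpow_pos_of_pos (by norm_num) _
        have hMM : M ≤ max M 0 := le_max_left _ _
        have hM0 : (0:ℝ) ≤ max M 0 := le_max_right _ _
        calc |deriv χ τ| ≤ M := hMτ
          _ ≤ max M 0 * ((3:ℝ) ^ (1 - s) * (3:ℝ) ^ (s - 1)) := by
              rw [← Real.rpow_add (by norm_num : (0:ℝ) < 3)]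
              norm_num
          _ = (max M 0 * 3 ^ (1 - s)) * (3:ℝ) ^ (s - 1) := by ring
          _ ≤ K * τ ^ (s - 1) := by
              have h1 : max M 0 * 3 ^ (1 - s) ≤ K := by
                have := le_max_right |s| (max M 0 * 3 ^ (1 - s))
                linarith
              have h2 : (0:ℝ) ≤ max M 0 * 3 ^ (1 - s) := by positivity
              calc (max M 0 * 3 ^ (1 - s)) * (3:ℝ) ^ (s - 1)
                  ≤ (max M 0 * 3 ^ (1 - s)) * τ ^ (s - 1) := by
                    exact mul_le_mul_of_nonneg_left h31 h2
                _ ≤ K * τ ^ (s - 1) := mul_le_mul_of_nonneg_right h1 hτs.le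
      · rw [hderiv_gt τ (by linarith), abs_mul, abs_of_pos hτs]
        have : |s| ≤ K := by
          have := le_max_left |s| (max M 0 * 3 ^ (1 - s))
          linarith
        exact mul_le_mul_of_nonneg_right this hτs.le
    intro σ hσ
    rcases le_or_gt 0 σ with h0 | h0
    · rw [abs_of_nonneg h0] at hσ ⊢
      exact keyPos σ hσ
    · rw [abs_of_neg h0] at hσ ⊢
      have := keyPos (-σ) hσ
      rw [← neg_neg σ, hderiv_neg (-σ), abs_neg, neg_neg] at *
      simpa using this
  -- choose constant
  refine ⟨K * 2 ^ (1 - s), by positivity, ?_⟩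
  intro θ hθ0 hθ1 N hN ξ η hη hξη
  have hNpos : (0:ℝ) < N := by linarith
  set r := |ξ - η| with hrdef
  set m := |η| with hmdef
  have hr2 : (2:ℝ) ≤ r := by
    calc (2:ℝ) = 2 * 1 := by ring
    _ ≤ 2 * N := by linarith
    _ ≤ r := hξη
  have hrpos : (0:ℝ) < r := by linarith
  have hm0 : (0:ℝ) ≤ m := abs_nonneg _
  rcases eq_or_ne η 0 with hη0 | hη0
  · subst hη0
    simp only [sub_zero, sub_self, abs_zero]
    exact mul_nonneg (mul_nonneg (mul_nonneg (mul_nonneg hKpos.le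
      (Real.rpow_nonneg (by norm_num) _)) (Real.rpow_nonneg hNpos.le _))
      (Real.rpow_nonneg hrpos.le _)) (Real.rpow_nonneg hm0 _)
  have hmpos : (0:ℝ) < m := abs_pos.mpr hη0
  -- MVT on segment
  set a := ξ / N with ha
  set b := (ξ - η) / N with hb
  have hab : a - b = η / N := by
    rw [ha, hb]; field_simp; ring
  have habs : |a - b| = m / N := by
    rw [hab, abs_div, abs_of_pos hNpos]
  have hbabs : |b| = r / N := by
    rw [hb, abs_div, abs_of_pos hNpos]
  set D : ℝ := K * (r / (2 * N)) ^ (s - 1) with hD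
  have seg_bound : ∀ x ∈ segment ℝ b a, |deriv χ x| ≤ D := by
    intro x hx
    rw [segment_eq_uIcc] at hx
    have hxb : |x - b| ≤ |a - b| := by
      rcases Set.mem_uIcc.mp hx with ⟨h1, h2⟩ | ⟨h1, h2⟩ <;>
      · rw [abs_le]
        constructor <;>
        · have h3 := le_abs_self (a - b)
          have h4 := neg_abs_le (a - b)
          linarith
    have hxlb : r / (2 * N) ≤ |x| := by
      have h1 : |b| - |x - b| ≤ |x| := by
        have := abs_sub_abs_le_abs_sub b x
        rw [abs_sub_comm] at this
        linarith
      rw [hbabs] at h1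
      rw [habs] at hxb
      have key2 : r / (2 * N) ≤ (r - m) / N := by
        rw [div_le_div_iff₀ (by positivity) hNpos]
        nlinarith
      have e : (r - m) / N = r / N - m / N := by ring
      linarith
    have hx1 : (1:ℝ) ≤ |x| := by
      have : (1:ℝ) ≤ r / (2 * N) := by
        rw [le_div_iff₀ (by positivity)]
        linarith
      linarith
    calc |deriv χ x| ≤ K * |x| ^ (s - 1) := key x hx1
      _ ≤ K * (r / (2 * N)) ^ (s - 1) := by
          apply mul_le_mul_of_nonneg_left ?_ hKpos.le
          exact Real.rpow_le_rpow_of_nonpos (by positivity) hxlb (by linarith)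
  have hmvt : |χ a - χ b| ≤ D * (m / N) := by
    have := Convex.norm_image_sub_le_of_norm_deriv_le
      (f := χ) (s := segment ℝ b a)
      (fun x _ => hd.differentiableAt)
      (fun x hx => seg_bound x hx)
      (convex_segment b a)
      (left_mem_segment ℝ b a) (right_mem_segment ℝ b a)
    rw [Real.norm_eq_abs, Real.norm_eq_abs] at this
    rwa [habs] at this
  -- arithmetic
  have h2Npos : (0:ℝ) < 2 * N := by positivity
  have e0 : (r / (2 * N)) ^ (s - 1) = r ^ (s - 1) * (2 * N) ^ (1 - s) := by
    rw [div_eq_mul_inv, Real.mul_rpow hrpos.le (by positivity),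
        Real.inv_rpow h2Npos.le, ← Real.rpow_neg h2Npos.le, neg_sub]
  have e1 : ((2:ℝ) * N) ^ (1 - s) = 2 ^ (1 - s) * N ^ (1 - s) :=
    Real.mul_rpow (by norm_num) hNpos.le
  have e2 : N ^ (1 - s) = N ^ (-s) * N := by
    rw [show (1:ℝ) - s = -s + 1 by ring, Real.rpow_add_one hNpos.ne']
  have eLHS : D * (m / N) = (K * 2 ^ (1 - s)) * N ^ (-s) * (r ^ (s - 1) * m) := by
    rw [hD, e0, e1, e2]
    field_simp
  -- comparison of powers
  have hmr : m ≤ r := by linarith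
  have hpow : r ^ (s - 1) * m ≤ r ^ (s - θ) * m ^ θ := by
    have h1 : r ^ (s - θ) * r ^ (θ - 1) = r ^ (s - 1) := by
      rw [← Real.rpow_add hrpos]
      ring_nf
    have h2 : m = m ^ θ * m ^ (1 - θ) := by
      rw [← Real.rpow_add hmpos, show θ + (1 - θ) = (1:ℝ) by ring, Real.rpow_one]
    have h3 : r ^ (θ - 1) * m ^ (1 - θ) ≤ 1 := by
      have : r ^ (θ - 1) * m ^ (1 - θ) = (m / r) ^ (1 - θ) := by
        rw [Real.div_rpow hmpos.le hrpos.le, show θ - 1 = -(1 - θ) by ring,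
            Real.rpow_neg hrpos.le]
        ring
      rw [this]
      exact Real.rpow_le_one (by positivity) ((div_le_one hrpos).mpr hmr) (by linarith)
    have h2' : m ^ θ * m ^ (1 - θ) = m := h2.symm
    calc r ^ (s - 1) * m = (r ^ (s - θ) * m ^ θ) * (r ^ (θ - 1) * m ^ (1 - θ)) := by
          rw [← h1]
          conv_lhs => rw [h2]
          ring
      _ ≤ (r ^ (s - θ) * m ^ θ) * 1 := by
          apply mul_le_mul_of_nonneg_left h3 (by positivity)
      _ = r ^ (s - θ) * m ^ θ := mul_one _
  calc |χ a - χ b| ≤ D * (m / N) := hmvt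
    _ = (K * 2 ^ (1 - s)) * N ^ (-s) * (r ^ (s - 1) * m) := eLHS
    _ ≤ (K * 2 ^ (1 - s)) * N ^ (-s) * (r ^ (s - θ) * m ^ θ) := by
        apply mul_le_mul_of_nonneg_left hpow (by positivity)
    _ = K * 2 ^ (1 - s) * N ^ (-s) * r ^ (s - θ) * m ^ θ := by ring
end
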